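/- arXiv:2108.12512 — 5 statements merged into one kernel-verified Lean document; each statement's English description precedes it below -/
import Mathlib

section
/- For a prime p, nonnegative integer m, and integer t with 0 ≤ t < p, the multinomial coefficient b_{t,m} = (tp^m)! / (p^m)!^t is congruent to t! modulo p. -/
/-- `b p t m` is the multinomial coefficient `(t * p^m)! / ((p^m)!)^t`. -/
def multinomB (p t m : ℕ) : ℕ := (t * p ^ m).factorial / ((p ^ m).factorial) ^ t

open Finset Nat in
lemma factorial_mul_pow_eq (q t : ℕ) :
    (t * q).factorial = (∏ i ∈ range t, Nat.choose ((i + 1) * q) q) * (q.factorial) ^ t := by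
  induction t with
  | zero => simp
  | succ t ih =>
    rw [prod_range_succ, succ_mul, ← Nat.add_choose_mul_factorial_mul_factorial (t * q) q, ih]
    ring

open Nat in
lemma choose_mul_pow_modeq (p : ℕ) (hp : p.Prime) (c m : ℕ) :
    Nat.choose (c * p ^ m) (p ^ m) ≡ c [MOD p] := by
  haveI : Fact p.Prime := ⟨hp⟩
  induction m with
  | zero => simpa [Nat.choose_one_right] using Nat.ModEq.refl c
  | succ m ih =>
    have := Choose.choose_modEq_choose_mod_mul_choose_div_nat
      (p := p) (n := c * p ^ (m + 1)) (k := p ^ (m + 1))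
    have hn : c * p ^ (m + 1) % p = 0 := by
      simp [pow_succ, ← mul_assoc, Nat.mul_mod_left]
    have hk : p ^ (m + 1) % p = 0 := by
      simp [pow_succ, Nat.mul_mod_left]
    have hn2 : c * p ^ (m + 1) / p = c * p ^ m := by
      rw [pow_succ, ← mul_assoc, Nat.mul_div_cancel _ hp.pos]
    have hk2 : p ^ (m + 1) / p = p ^ m := by
      rw [pow_succ, Nat.mul_div_cancel _ hp.pos]
    rw [hn, hk, hn2, hk2] at this
    rw [Nat.choose_self, one_mul] at this
    exact this.trans ih

/-- For a prime `p`, `m ≥ 0` and `0 ≤ t < p`, the multinomial coefficient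
`b_{t,m} = (t p^m)! / ((p^m)!)^t` is congruent to `t!` modulo `p`. -/
theorem stmt_0 (p : ℕ) (hp : p.Prime) (m t : ℕ) (ht : t < p) :
    multinomB p t m ≡ t.factorial [MOD p] := by
  have hq : (Nat.factorial (p ^ m)) ^ t ≠ 0 := pow_ne_zero _ (Nat.factorial_ne_zero _)
  have hb : multinomB p t m = ∏ i ∈ Finset.range t, Nat.choose ((i + 1) * p ^ m) (p ^ m) := by
    rw [multinomB, factorial_mul_pow_eq, Nat.mul_div_cancel _ (Nat.pos_of_ne_zero hq)]
  rw [hb, ← Finset.prod_range_add_one_eq_factorial, ← ZMod.natCast_eq_natCast_iff]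
  push_cast
  exact Finset.prod_congr rfl fun i _ => by
    have := (choose_mul_pow_modeq p hp (i + 1) m)
    rw [← ZMod.natCast_eq_natCast_iff] at this
    push_cast at this
    exact this
end

section
/- For a prime p and any nonnegative integer m, the multinomial coefficient b_m = ((p-1)p^m)! / ((p^m)!)^{p-1} is congruent to -1 modulo p. -/
/-- `b_m = ((p-1) * p^m)! / ((p^m)!)^(p-1)`. -/
def multinomBm (p m : ℕ) : ℕ := ((p - 1) * p ^ m).factorial / ((p ^ m).factorial) ^ (p - 1)

lemma factorial_mul_eq_prod_choose (N j : ℕ) :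
    (j * N).factorial = (∏ k ∈ Finset.range j, ((k + 1) * N).choose N) * (N.factorial) ^ j := by
  induction j with
  | zero => simp
  | succ j ih =>
    have key : (j * N + N).choose N * (j * N).factorial * N.factorial = (j * N + N).factorial :=
      Nat.add_choose_mul_factorial_mul_factorial (j * N) N
    rw [Finset.prod_range_succ, pow_succ, Nat.add_mul, one_mul, ← key, ih]
    ring

lemma multinomBm_eq_prod (p m : ℕ) :
    multinomBm p m = ∏ k ∈ Finset.range (p - 1), ((k + 1) * p ^ m).choose (p ^ m) := by
  unfold multinomBm
  rw [factorial_mul_eq_prod_choose (p ^ m) (p - 1),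
    Nat.mul_div_cancel _ (Nat.pos_of_ne_zero (by positivity))]

lemma choose_mul_pow_modEq (p : ℕ) [Fact p.Prime] (k m : ℕ) (hk : k < p) :
    (k * p ^ m).choose (p ^ m) ≡ k [MOD p] := by
  induction m with
  | zero => simpa using Nat.ModEq.refl k
  | succ m ih =>
    have h := @Choose.choose_modEq_choose_mod_mul_choose_div_nat
      (k * p ^ (m + 1)) (p ^ (m + 1)) p _
    have hp : 0 < p := (Fact.out : p.Prime).pos
    have h1 : k * p ^ (m + 1) % p = 0 := by
      rw [pow_succ, ← mul_assoc]; exact Nat.mul_mod_left _ _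
    have h2 : p ^ (m + 1) % p = 0 := by
      rw [pow_succ]; exact Nat.mul_mod_left _ _
    have h3 : k * p ^ (m + 1) / p = k * p ^ m := by
      rw [pow_succ, ← mul_assoc]; exact Nat.mul_div_cancel _ hp
    have h4 : p ^ (m + 1) / p = p ^ m := by
      rw [pow_succ]; exact Nat.mul_div_cancel _ hp
    rw [h1, h2, h3, h4] at h
    have : Nat.choose 0 0 * ((k * p ^ m).choose (p ^ m)) ≡ 1 * k [MOD p] :=
      (Nat.ModEq.refl _).mul ih |>.trans (by simp [Nat.ModEq.refl])
    simpa using h.trans this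

/-- For a prime `p` and any `m ≥ 0`, the multinomial coefficient
`b_m = ((p-1) p^m)! / ((p^m)!)^(p-1)` is congruent to `-1` modulo `p`. -/
theorem stmt_1 (p : ℕ) (hp : p.Prime) (m : ℕ) :
    ((multinomBm p m : ℤ) : ZMod p) = -1 := by
  haveI : Fact p.Prime := ⟨hp⟩
  rw [multinomBm_eq_prod]
  push_cast
  have : ∀ k ∈ Finset.range (p - 1),
      (((k + 1) * p ^ m).choose (p ^ m) : ZMod p) = ((k + 1 : ℕ) : ZMod p) := by
    intro k hk
    have hk' : k + 1 < p := by
      have := Finset.mem_range.mp hk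
      omega
    exact_mod_cast (ZMod.natCast_eq_natCast_iff' _ _ _).mpr
      (choose_mul_pow_modEq p (k + 1) m hk')
  rw [Finset.prod_congr rfl this]
  have : (∏ k ∈ Finset.range (p - 1), ((k + 1 : ℕ) : ZMod p)) = ((Nat.factorial (p - 1) : ℕ) : ZMod p) := by
    rw [← Nat.cast_prod, Finset.prod_range_add_one_eq_factorial]
  rw [this, ZMod.wilsons_lemma]
end

section
/- For a prime p and a positive integer n with base-p expansion n = n_0 + n_1 p + ... + n_l p^l (each 0 ≤ n_i < p), the multinomial coefficient c_n = n! / (n_0! (n_1 p)! (n_2 p^2)! ... (n_l p^l)!) is congruent to 1 modulo p. -/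
/-!
Peel off the lowest digit: `(m p^j)! = C(m p^j, (m % p) p^j) · ((m % p) p^j)! · ((m / p) p^(j+1))!`,
and by Lucas' theorem `C(p^j m, p^j (m % p)) ≡ C(m, m % p) ≡ C(m % p, m % p) · C(m / p, 0) = 1 (mod p)`.
Iterating over the digits writes `n!` as the product of the `(n_i p^i)!` times a number `≡ 1`.
-/

/-- `multinomC p n` is the multinomial coefficient
`c_n = n! / (n_0! * (n_1 p)! * ⋯ * (n_l p^l)!)`, where `n = n_0 + n_1 p + ⋯ + n_l p^l`
is the base-`p` expansion of `n`. -/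
def multinomC (p n : ℕ) : ℕ :=
  n.factorial / ((Nat.digits p n).zipIdx.map fun x => (x.1 * p ^ x.2).factorial).prod

open Nat

/-- The product of the `(d_i p^(j+i))!` over the base-`p` digits `d_i` of `m`. -/
def digitFactorialProd (p j m : ℕ) : ℕ :=
  (((digits p m).zipIdx j).map fun x => (x.1 * p ^ x.2)!).prod

theorem digitFactorialProd_pos (p j m : ℕ) : 0 < digitFactorialProd p j m :=
  List.prod_pos fun _ hx => by
    obtain ⟨_, _, rfl⟩ := List.mem_map.mp hx
    exact factorial_pos _

theorem digitFactorialProd_of_pos {p : ℕ} (hp : 1 < p) (j : ℕ) {m : ℕ} (hm : 0 < m) :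
    digitFactorialProd p j m = (m % p * p ^ j)! * digitFactorialProd p (j + 1) (m / p) := by
  rw [digitFactorialProd, digits_def' hp hm, List.zipIdx_cons, List.map_cons, List.prod_cons,
    digitFactorialProd]

theorem choose_mul_pow_mod_mul_pow_modEq_one {p : ℕ} [Fact p.Prime] (j m : ℕ) :
    (m * p ^ j).choose (m % p * p ^ j) ≡ 1 [MOD p] := by
  have hp : 0 < p := (Fact.out : p.Prime).pos
  rw [mul_comm m, mul_comm (m % p)]
  calc (p ^ j * m).choose (p ^ j * (m % p))
      ≡ m.choose (m % p) [MOD p] := Choose.choose_pow_mul_pow_mul_modEq_choose_nat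
    _ ≡ (m % p).choose (m % p % p) * (m / p).choose (m % p / p) [MOD p] :=
        Choose.choose_modEq_choose_mod_mul_choose_div_nat
    _ = 1 := by simp [Nat.div_eq_of_lt (Nat.mod_lt m hp)]

theorem factorial_mul_pow_eq_mul_digitFactorialProd {p : ℕ} [Fact p.Prime] (m j : ℕ) :
    ∃ c, c ≡ 1 [MOD p] ∧ (m * p ^ j)! = c * digitFactorialProd p j m := by
  have hp : 1 < p := (Fact.out : p.Prime).one_lt
  induction m using Nat.strong_induction_on generalizing j with
  | _ m ih =>
    rcases Nat.eq_zero_or_pos m with rfl | hm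
    · exact ⟨1, rfl, by simp [digitFactorialProd]⟩
    obtain ⟨c, hc, hfac⟩ := ih (m / p) (Nat.div_lt_self hm hp) (j + 1)
    have hsplit : m * p ^ j = m / p * p ^ (j + 1) + m % p * p ^ j := by
      conv_lhs => rw [← Nat.div_add_mod m p]
      ring
    refine ⟨(m * p ^ j).choose (m % p * p ^ j) * c,
      by simpa using (choose_mul_pow_mod_mul_pow_modEq_one j m).mul hc, ?_⟩
    calc (m * p ^ j)!
        = (m * p ^ j).choose (m % p * p ^ j) * (m % p * p ^ j)! * (m / p * p ^ (j + 1))! := by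
          rw [hsplit, mul_right_comm, Nat.add_choose_mul_factorial_mul_factorial]
      _ = _ := by rw [hfac, digitFactorialProd_of_pos hp j hm]; ring

theorem stmt_2_general (p : ℕ) (hp : p.Prime) (n : ℕ) :
    multinomC p n ≡ 1 [MOD p] := by
  have : Fact p.Prime := ⟨hp⟩
  obtain ⟨c, hc, hfac⟩ := factorial_mul_pow_eq_mul_digitFactorialProd (p := p) n 0
  rw [pow_zero, mul_one] at hfac
  have hc_eq : multinomC p n = c := by
    rw [multinomC, hfac]
    exact Nat.mul_div_cancel _ (digitFactorialProd_pos p 0 n)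
  exact hc_eq ▸ hc

/-- For a prime `p` and a positive integer `n`, the multinomial coefficient `c_n`
is congruent to `1` modulo `p`. -/
theorem stmt_2 (p : ℕ) (hp : p.Prime) (n : ℕ) (hn : 0 < n) :
    multinomC p n ≡ 1 [MOD p] :=
  stmt_2_general p hp n
end

section
/- For a prime p and nonnegative integer n, the quantity C(p^{n+1}, p^n) · c_{p^n - 1} / c_{p^{n+1} - 1} equals p, where c_m denotes the base-p multinomial coefficient. Equivalently, C(p^{n+1}, p^n) · c_{p^n - 1} = p · c_{p^{n+1} - 1}. -/
/-!
The digits of `p ^ n - 1` are all `p - 1`, so `c_{p^n - 1}` is the multinomial coefficient of the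
parts `(p - 1) p^i`, `i < n`. Splitting off the top part gives
`c_{p^(n+1) - 1} = C(p^(n+1) - 1, (p - 1) p^n) · c_{p^n - 1}`, and
`C(p · p^n, p^n) = p · C(p · p^n - 1, (p - 1) p^n)` by absorbing the factor `p^(n+1) / p^n`.
-/

open Finset

theorem List.prod_map_zipIdx_replicate {α M : Type*} [CommMonoid M] (f : α × ℕ → M) (a : α) :
    ∀ n k : ℕ, (((List.replicate n a).zipIdx k).map f).prod = ∏ i ∈ Finset.range n, f (a, k + i)
  | 0, _ => by simp
  | n + 1, k => by
    rw [List.replicate_succ, List.zipIdx_cons, List.map_cons, List.prod_cons,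
      prod_map_zipIdx_replicate f a n (k + 1), Finset.prod_range_succ']
    simp only [add_zero, add_assoc, add_comm 1, mul_comm]

theorem Nat.digits_pow_sub_one {b : ℕ} (hb : 1 < b) : ∀ n : ℕ,
    b.digits (b ^ n - 1) = List.replicate n (b - 1)
  | 0 => by simp
  | n + 1 => by
    have hpow : 1 ≤ b ^ n := Nat.one_le_pow _ _ (by omega)
    have hsplit : b ^ (n + 1) - 1 = (b - 1) + b * (b ^ n - 1) := by
      rw [pow_succ', Nat.mul_sub, mul_one]
      have : b ≤ b * b ^ n := Nat.le_mul_of_pos_right _ hpow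
      omega
    rw [hsplit, Nat.digits_add b hb _ _ (by omega) (by omega), digits_pow_sub_one hb n,
      List.replicate_succ]

theorem Nat.sum_range_pred_mul_pow (b n : ℕ) : ∑ i ∈ range n, (b - 1) * b ^ i = b ^ n - 1 := by
  rcases b.eq_zero_or_pos with rfl | hb
  · cases n <;> simp
  · rw [← mul_sum, mul_comm, geom_sum_mul_of_one_le hb]

theorem multinomC_pow_sub_one {p : ℕ} (hp : 1 < p) (n : ℕ) :
    multinomC p (p ^ n - 1) = Nat.multinomial (range n) fun i => (p - 1) * p ^ i := by
  rw [multinomC, Nat.digits_pow_sub_one hp, List.prod_map_zipIdx_replicate, Nat.multinomial,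
    Nat.sum_range_pred_mul_pow]
  simp only [zero_add]

theorem multinomC_pow_succ_sub_one {p : ℕ} (hp : 1 < p) (n : ℕ) :
    multinomC p (p ^ (n + 1) - 1)
      = (p ^ (n + 1) - 1).choose ((p - 1) * p ^ n) * multinomC p (p ^ n - 1) := by
  have hsum : (p - 1) * p ^ n + (p ^ n - 1) = p ^ (n + 1) - 1 := by
    rw [← Nat.sum_range_pred_mul_pow p n, ← Nat.sum_range_pred_mul_pow p (n + 1),
      sum_range_succ_comm]
  rw [multinomC_pow_sub_one hp, multinomC_pow_sub_one hp, range_add_one,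
    Nat.multinomial_insert notMem_range_self, Nat.sum_range_pred_mul_pow, hsum]

theorem Nat.choose_mul_left_self_eq {k : ℕ} (b : ℕ) (hk : 0 < k) :
    (b * k).choose k = b * (b * k - 1).choose ((b - 1) * k) := by
  rcases b.eq_zero_or_pos with rfl | hb
  · simp [Nat.choose_eq_zero_of_lt hk]
  have hkbk : k ≤ b * k := Nat.le_mul_of_pos_left k hb
  have habsorb := Nat.add_one_mul_choose_eq (b * k - 1) (k - 1)
  rw [Nat.sub_add_cancel (by omega), Nat.sub_add_cancel hk] at habsorb
  have hsymm := Nat.choose_symm_of_eq_add (n := b * k - 1) (a := k - 1) (b := (b - 1) * k)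
    (by rw [Nat.sub_one_mul]; omega)
  rw [← hsymm]
  apply Nat.eq_of_mul_eq_mul_right hk
  rw [← habsorb]
  ring

/-- For a prime `p` and `n ≥ 0`, one has
`C(p^(n+1), p^n) · c_{p^n - 1} = p · c_{p^(n+1) - 1}`. -/
theorem stmt_6 (p : ℕ) (hp : p.Prime) (n : ℕ) :
    (p ^ (n + 1)).choose (p ^ n) * multinomC p (p ^ n - 1)
      = p * multinomC p (p ^ (n + 1) - 1) := by
  rw [multinomC_pow_succ_sub_one hp.one_lt, pow_succ',
    Nat.choose_mul_left_self_eq p (pow_pos hp.pos n)]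
  exact mul_assoc ..
end

section
/- Let p be a prime, k a field of characteristic p, and R⟨Y⟩ a semifree Γ-extension of a local ring (R,m,k). There is a short exact sequence of graded k-vector spaces 0 → kY^{(p^∞)} → ind R⟨Y⟩ → Γ-ind R⟨Y⟩ → 0, where kY^{(p^∞)} is spanned by the residue classes of y^{(p^i)} for even-degree y ∈ Y and i ≥ 1. -/
/-!
Modulo `m·A`, the square `m_A²` is spanned by the products of two monomials of positive
weight and `m_A^(2)` by the monomials of weight at least two. A monomial in two or more
variables is a unit multiple of a product of monomials in disjoint variables, and
`y^(a) · y^(n-a) = C(n,a) y^(n)`; when `n` is not a power of `p`, Lucas' theorem provides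
`0 < a < n` with `C(n,a)` a unit mod `m`, so `y^(n)` is decomposable. Conversely, a product of
two positive-weight monomials can only hit `y^(p^i)` with the coefficient `C(p^i, a)`, which `p`
divides; hence the `y^(p^i)`-coordinate maps `m·A + m_A²` into `m`, which gives
`P ∩ (m·A + m_A²) ⊆ m·P`.
-/

/-- Index type for the normal `Γ`-monomials of a semifree `Γ`-extension: finitely
supported exponent vectors, with exponent at most `1` at the exterior (odd-degree)
variables. -/
def NormalMono (Y : Type*) (evenVar : Y → Prop) : Type _ :=
  {f : Y →₀ ℕ // ∀ y : Y, ¬ evenVar y → f y ≤ 1}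

/-- The (divided-power) weight of a `Γ`-monomial: the sum of its exponents. -/
def monoWeight {Y : Type*} (f : Y →₀ ℕ) : ℕ := f.sum fun _ n => n

/-- An abstract model of (the underlying algebra of) a semifree `Γ`-extension
`R⟨Y⟩` of a local ring `R`:  a commutative `R`-algebra `A`, with a set of variables
indexed by `Y` (split into divided-power variables `evenVar` and exterior ones),
such that the normal `Γ`-monomials `y₁^(i₁) ⋯ yₙ^(iₙ)` form an `R`-basis, the monomial
of weight zero is `1`, the product of two normal monomials is an integer multiple of
the normal monomial obtained by adding exponents (and is `0` if the exponents are not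
admissible), divided powers of a single divided-power variable multiply by the rule
`y^(n) · y^(m) = C(n+m, n) · y^(n+m)`, and normal monomials in disjoint sets of
variables multiply to a unit multiple of their concatenation. -/
structure GammaExt (R : Type*) [CommRing R] (A : Type*) [CommRing A] [Algebra R A] where
  /-- the set of `Γ`-variables -/
  Y : Type*
  /-- which variables are divided-power (even-degree) variables -/
  evenVar : Y → Prop
  /-- the normal `Γ`-monomials form an `R`-basis of `A` -/
  basis : Module.Basis (NormalMono Y evenVar) R A
  basis_zero : ∀ f : NormalMono Y evenVar, f.1 = 0 → basis f = 1
  mul_basis : ∀ f g h : NormalMono Y evenVar, h.1 = f.1 + g.1 →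
    ∃ c : ℤ, basis f * basis g = c • basis h
  mul_basis_zero : ∀ f g : NormalMono Y evenVar,
    (∀ h : NormalMono Y evenVar, h.1 ≠ f.1 + g.1) → basis f * basis g = 0
  mul_single : ∀ (y : Y), evenVar y → ∀ (n m : ℕ) (f g h : NormalMono Y evenVar),
    f.1 = Finsupp.single y n → g.1 = Finsupp.single y m →
    h.1 = Finsupp.single y (n + m) →
    basis f * basis g = (((n + m).choose n : ℤ)) • basis h
  mul_disjoint : ∀ f g h : NormalMono Y evenVar,
    Disjoint f.1.support g.1.support → h.1 = f.1 + g.1 →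
    ∃ c : ℤˣ, basis f * basis g = (c : ℤ) • basis h

open IsLocalRing Submodule

lemma monoWeight_eq_degree {Y : Type*} (f : Y →₀ ℕ) : monoWeight f = f.degree := rfl

lemma Finsupp.eq_single_of_add_eq_single {Y : Type*} {f g : Y →₀ ℕ} {y : Y} {n : ℕ}
    (h : f + g = Finsupp.single y n) : f = Finsupp.single y (f y) :=
  Finsupp.support_subset_singleton.mp <|
    (Finsupp.support_mono le_self_add).trans (h ▸ Finsupp.support_single_subset)

lemma Finsupp.disjoint_support_single_erase {Y M : Type*} [Zero M] (f : Y →₀ M) (y : Y) :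
    Disjoint (Finsupp.single y (f y)).support (f.erase y).support := by
  classical
  refine Finset.disjoint_left.mpr fun z hz hz' => ?_
  rw [Finset.mem_singleton.mp (Finsupp.support_single_subset hz), Finsupp.support_erase] at hz'
  exact Finset.notMem_erase y _ hz'

lemma IsLocalRing.natCast_mem_maximalIdeal_iff {R : Type*} [CommRing R] [IsLocalRing R]
    (p : ℕ) [CharP (ResidueField R) p] (n : ℕ) : (n : R) ∈ maximalIdeal R ↔ p ∣ n := by
  rw [← residue_eq_zero_iff, map_natCast, CharP.cast_eq_zero_iff (ResidueField R) p]

lemma Nat.exists_not_dvd_choose_of_ne_pow {p n : ℕ} (hp : p.Prime) (hn : 0 < n)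
    (h : ∀ i, n ≠ p ^ i) : ∃ a, 0 < a ∧ a < n ∧ ¬ p ∣ n.choose a := by
  have := Fact.mk hp
  by_contra! hdvd
  refine h _ (Choose.eq_pow_multiplicity_of_choose_modEq_zero_nat hn fun i hi => ?_)
  rw [Finset.mem_Icc] at hi
  exact Nat.modEq_zero_iff_dvd.mpr (hdvd i (by omega) (by omega))

namespace Module.Basis

variable {ι R M : Type*} [CommSemiring R] [AddCommMonoid M] [Module R M]

lemma mem_ideal_smul_span_image_of_repr_mem (b : Basis ι R M) (I : Ideal R) {s : Set ι}
    {x : M} (hx : x ∈ span R (b '' s)) (hI : ∀ i ∈ s, b.repr x i ∈ I) :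
    x ∈ I • span R (b '' s) := by
  have hsupp := b.mem_span_image.mp hx
  rw [← b.linearCombination_repr x, Finsupp.linearCombination_apply]
  exact sum_mem fun i hi =>
    smul_mem_smul (hI i (hsupp hi)) (subset_span ⟨i, hsupp hi, rfl⟩)

end Module.Basis

namespace NormalMono

variable {Y : Type*} {evenVar : Y → Prop}

def ofLE (f : NormalMono Y evenVar) (g : Y →₀ ℕ) (hg : g ≤ f.1) : NormalMono Y evenVar :=
  ⟨g, fun y hy => (hg y).trans (f.2 y hy)⟩

@[simp]
lemma ofLE_val (f : NormalMono Y evenVar) (g : Y →₀ ℕ) (hg : g ≤ f.1) :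
    (f.ofLE g hg).1 = g :=
  rfl

lemma evenVar_of_one_lt (f : NormalMono Y evenVar) {y : Y} (hy : 1 < f.1 y) : evenVar y :=
  not_not.mp fun hodd => (f.2 y hodd).not_gt hy

end NormalMono

namespace GammaExt

variable {R A : Type*} [CommRing R] [CommRing A] [Algebra R A] (E : GammaExt R A)

/-- `m·A + augSq = m·A + m_A²`. -/
def augSq : Submodule R A :=
  span R {x | ∃ f g : NormalMono E.Y E.evenVar,
    1 ≤ monoWeight f.1 ∧ 1 ≤ monoWeight g.1 ∧ x = E.basis f * E.basis g}

/-- `m·A + augDivSq = m·A + m_A^(2)`. -/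
def augDivSq : Submodule R A :=
  span R {x | ∃ f : NormalMono E.Y E.evenVar, 2 ≤ monoWeight f.1 ∧ x = E.basis f}

def pPowMonos (p : ℕ) : Set (NormalMono E.Y E.evenVar) :=
  {f | ∃ y i, E.evenVar y ∧ 1 ≤ i ∧ f.1 = Finsupp.single y (p ^ i)}

lemma basis_mul_basis_eq_zero_or (f g : NormalMono E.Y E.evenVar) :
    E.basis f * E.basis g = 0 ∨ ∃ h : NormalMono E.Y E.evenVar, h.1 = f.1 + g.1 ∧
      ∃ c : ℤ, E.basis f * E.basis g = c • E.basis h := by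
  by_cases hh : ∃ h : NormalMono E.Y E.evenVar, h.1 = f.1 + g.1
  · obtain ⟨h, hh⟩ := hh
    exact .inr ⟨h, hh, E.mul_basis f g h hh⟩
  · push Not at hh
    exact .inl (E.mul_basis_zero f g hh)

lemma augSq_le_augDivSq : E.augSq ≤ E.augDivSq := by
  rw [augSq, augDivSq, span_le]
  rintro _ ⟨f, g, hf, hg, rfl⟩
  rcases E.basis_mul_basis_eq_zero_or f g with h0 | ⟨h, hh, c, hc⟩
  · rw [SetLike.mem_coe, h0]
    exact zero_mem _
  · rw [SetLike.mem_coe, hc]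
    refine zsmul_mem (subset_span ?_) c
    refine ⟨h, ?_, rfl⟩
    rw [monoWeight_eq_degree] at hf hg ⊢
    rw [hh, map_add]
    omega

lemma span_pPowMonos_le_augDivSq {p : ℕ} (hp : 1 < p) :
    span R (E.basis '' E.pPowMonos p) ≤ E.augDivSq := by
  refine span_le.mpr ?_
  rintro _ ⟨f, ⟨y, i, -, hi, hf⟩, rfl⟩
  refine subset_span ⟨f, ?_, rfl⟩
  rw [hf, monoWeight_eq_degree, Finsupp.degree_single]
  exact Nat.one_lt_pow (by omega) hp

lemma basis_mem_augSq_of_mul_eq {f g g' : NormalMono E.Y E.evenVar}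
    (hg : 1 ≤ monoWeight g.1) (hg' : 1 ≤ monoWeight g'.1) {c : ℤ} (hc : IsUnit (c : R))
    (h : E.basis g * E.basis g' = c • E.basis f) : E.basis f ∈ E.augSq := by
  obtain ⟨u, hu⟩ := hc
  have hf : E.basis f = (↑u⁻¹ : R) • (E.basis g * E.basis g') := by
    rw [h, ← Int.cast_smul_eq_zsmul R, smul_smul, ← hu, Units.inv_mul, one_smul]
  rw [hf]
  exact smul_mem _ _ (subset_span ⟨g, g', hg, hg', rfl⟩)

/-- `f` involves a variable other than `y`, so it is a unit multiple of `y^(f y)` times the rest. -/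
lemma basis_mem_augSq_of_ne_single (f : NormalMono E.Y E.evenVar) {y : E.Y}
    (hy : y ∈ f.1.support) (hf : f.1 ≠ Finsupp.single y (f.1 y)) : E.basis f ∈ E.augSq := by
  have hsplit := Finsupp.single_add_erase y f.1
  let g := f.ofLE (Finsupp.single y (f.1 y)) (Finsupp.single_le_iff.mpr le_rfl)
  let g' := f.ofLE (f.1.erase y) (le_add_self.trans_eq hsplit)
  obtain ⟨c, hc⟩ := E.mul_disjoint g g' f (f.1.disjoint_support_single_erase y) hsplit.symm
  refine E.basis_mem_augSq_of_mul_eq ?_ ?_ (c.isUnit.map (Int.castRingHom R)) hc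
  · rw [NormalMono.ofLE_val, monoWeight_eq_degree, Finsupp.degree_single]
    exact Nat.one_le_iff_ne_zero.mpr (Finsupp.mem_support_iff.mp hy)
  · refine Nat.one_le_iff_ne_zero.mpr fun h0 => hf ?_
    rw [NormalMono.ofLE_val, monoWeight_eq_degree, Finsupp.degree_eq_zero_iff] at h0
    rw [h0, add_zero] at hsplit
    exact hsplit.symm

/-- `y^(a) · y^(n-a) = C(n, a) · y^(n)`. -/
lemma basis_mem_augSq_of_isUnit_choose (f : NormalMono E.Y E.evenVar) {y : E.Y} {n a : ℕ}
    (hf : f.1 = Finsupp.single y n) (hy : E.evenVar y) (ha : 0 < a) (han : a < n)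
    (hu : IsUnit (n.choose a : R)) : E.basis f ∈ E.augSq := by
  let g := f.ofLE (Finsupp.single y a) (hf ▸ Finsupp.single_le_single.mpr han.le)
  let g' := f.ofLE (Finsupp.single y (n - a)) (hf ▸ Finsupp.single_le_single.mpr (by omega))
  have hmul := E.mul_single y hy a (n - a) g g' f rfl rfl (by rw [hf, Nat.add_sub_cancel' han.le])
  rw [Nat.add_sub_cancel' han.le] at hmul
  refine E.basis_mem_augSq_of_mul_eq ?_ ?_ (by rwa [Int.cast_natCast]) hmul <;>
    simp only [g, g', NormalMono.ofLE_val, monoWeight_eq_degree, Finsupp.degree_single] <;> omega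

variable [IsLocalRing R] {p : ℕ} [CharP (ResidueField R) p]

lemma basis_mem_augSq_sup_span_pPowMonos (hp : p.Prime) (f : NormalMono E.Y E.evenVar)
    (hf : 2 ≤ monoWeight f.1) : E.basis f ∈ E.augSq ⊔ span R (E.basis '' E.pPowMonos p) := by
  obtain ⟨y, hy⟩ : f.1.support.Nonempty := by
    refine Finsupp.support_nonempty_iff.mpr fun h0 => ?_
    simp [h0, monoWeight_eq_degree] at hf
  by_cases hsingle : f.1 = Finsupp.single y (f.1 y)
  swap
  · exact mem_sup_left (E.basis_mem_augSq_of_ne_single f hy hsingle)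
  have hn : 2 ≤ f.1 y := by
    rwa [hsingle, monoWeight_eq_degree, Finsupp.degree_single] at hf
  have hyeven := f.evenVar_of_one_lt hn
  by_cases hpow : ∃ i, f.1 y = p ^ i
  · obtain ⟨i, hi⟩ := hpow
    have hi1 : 1 ≤ i := Nat.one_le_iff_ne_zero.mpr fun h0 => by simp [h0] at hi; omega
    exact mem_sup_right (subset_span ⟨f, ⟨y, i, hyeven, hi1, hi ▸ hsingle⟩, rfl⟩)
  · push Not at hpow
    obtain ⟨a, ha, han, hndvd⟩ := Nat.exists_not_dvd_choose_of_ne_pow hp (by omega) hpow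
    refine mem_sup_left (E.basis_mem_augSq_of_isUnit_choose f hsingle hyeven ha han ?_)
    rwa [← notMem_maximalIdeal, natCast_mem_maximalIdeal_iff p]

lemma augSq_sup_span_pPowMonos (hp : p.Prime) :
    E.augSq ⊔ span R (E.basis '' E.pPowMonos p) = E.augDivSq := by
  refine le_antisymm (sup_le E.augSq_le_augDivSq (E.span_pPowMonos_le_augDivSq hp.one_lt)) ?_
  refine span_le.mpr ?_
  rintro _ ⟨f, hf, rfl⟩
  exact E.basis_mem_augSq_sup_span_pPowMonos hp f hf

/-- The `y^(p^i)`-coefficient of `y^(a) · y^(p^i - a)` is `C(p^i, a)`, divisible by `p`. -/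
lemma coord_basis_mul_basis_mem_maximalIdeal (hp : p.Prime) {h : NormalMono E.Y E.evenVar}
    (hh : h ∈ E.pPowMonos p) {f g : NormalMono E.Y E.evenVar}
    (hf : 1 ≤ monoWeight f.1) (hg : 1 ≤ monoWeight g.1) :
    E.basis.coord h (E.basis f * E.basis g) ∈ maximalIdeal R := by
  obtain ⟨y, i, hy, -, hhy⟩ := hh
  by_cases hfg : f.1 + g.1 = h.1
  · have hf1 := Finsupp.eq_single_of_add_eq_single (hfg.trans hhy)
    have hg1 := Finsupp.eq_single_of_add_eq_single ((add_comm g.1 f.1 ▸ hfg).trans hhy)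
    have hsum : f.1 y + g.1 y = p ^ i := by
      simpa using DFunLike.congr_fun (hfg.trans hhy) y
    rw [hf1, monoWeight_eq_degree, Finsupp.degree_single] at hf
    rw [hg1, monoWeight_eq_degree, Finsupp.degree_single] at hg
    rw [E.mul_single y hy _ _ f g h hf1 hg1 (by rw [hhy, hsum]), map_zsmul,
      Module.Basis.coord_apply, Module.Basis.repr_self, Finsupp.single_eq_same,
      zsmul_eq_mul, mul_one, Int.cast_natCast, natCast_mem_maximalIdeal_iff p, hsum]
    exact hp.dvd_choose_pow (by omega) (by omega)
  · rcases E.basis_mul_basis_eq_zero_or f g with h0 | ⟨h', hh', c, hc⟩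
    · rw [h0, map_zero]
      exact zero_mem _
    · have hne : h' ≠ h := fun e => hfg (by rw [← e, hh'])
      rw [hc, map_zsmul, Module.Basis.coord_apply, Module.Basis.repr_self,
        Finsupp.single_eq_of_ne' hne, smul_zero]
      exact zero_mem _

lemma sup_augSq_le_comap_coord (hp : p.Prime) {h : NormalMono E.Y E.evenVar}
    (hh : h ∈ E.pPowMonos p) :
    maximalIdeal R • ⊤ ⊔ E.augSq ≤ comap (E.basis.coord h) (maximalIdeal R) := by
  refine sup_le (smul_le.mpr fun r hr a _ => ?_) (span_le.mpr ?_)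
  · rw [mem_comap, LinearMap.map_smul, smul_eq_mul]
    exact Ideal.mul_mem_right _ _ hr
  · rintro _ ⟨f, g, hf, hg, rfl⟩
    exact E.coord_basis_mul_basis_mem_maximalIdeal hp hh hf hg

lemma span_pPowMonos_inf_le (hp : p.Prime) :
    span R (E.basis '' E.pPowMonos p) ⊓ (maximalIdeal R • ⊤ ⊔ E.augSq) ≤
      maximalIdeal R • span R (E.basis '' E.pPowMonos p) := fun _ ⟨hxP, hxD⟩ =>
  E.basis.mem_ideal_smul_span_image_of_repr_mem _ hxP fun _ hh =>
    E.sup_augSq_le_comap_coord hp hh hxD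

end GammaExt

/-- In the short exact sequence, `Dind ≤ DGind` is the surjectivity of `ind → Γ-ind`,
`Dind ⊔ P = DGind` the exactness in the middle, and `P ⊓ Dind ≤ m • P` the injectivity of
`kY^(p^∞) → ind`. -/
theorem stmt_17 {R A : Type*} [CommRing R] [CommRing A] [Algebra R A] [IsLocalRing R]
    (p : ℕ) (hp : p.Prime) [CharP (IsLocalRing.ResidueField R) p]
    (E : GammaExt R A)
    (mRA Dind DGind P : Submodule R A)
    (hmRA : mRA = IsLocalRing.maximalIdeal R • (⊤ : Submodule R A))
    (hDind : Dind = mRA ⊔ Submodule.span R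
      {x : A | ∃ f g : NormalMono E.Y E.evenVar,
        1 ≤ monoWeight f.1 ∧ 1 ≤ monoWeight g.1 ∧ x = E.basis f * E.basis g})
    (hDGind : DGind = mRA ⊔ Submodule.span R
      {x : A | ∃ f : NormalMono E.Y E.evenVar, 2 ≤ monoWeight f.1 ∧ x = E.basis f})
    (hP : P = Submodule.span R
      {x : A | ∃ (y : E.Y) (i : ℕ) (f : NormalMono E.Y E.evenVar),
        E.evenVar y ∧ 1 ≤ i ∧ f.1 = Finsupp.single y (p ^ i) ∧ x = E.basis f}) :
    Dind ≤ DGind ∧ Dind ⊔ P = DGind ∧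
      P ⊓ Dind ≤ IsLocalRing.maximalIdeal R • P := by
  have hP' : P = span R (E.basis '' E.pPowMonos p) := by
    rw [hP]
    congr 1
    ext x
    constructor
    · rintro ⟨y, i, f, hy, hi, hf, rfl⟩
      exact ⟨f, ⟨y, i, hy, hi, hf⟩, rfl⟩
    · rintro ⟨f, ⟨y, i, hy, hi, hf⟩, rfl⟩
      exact ⟨y, i, f, hy, hi, hf, rfl⟩
  subst hmRA hDind hDGind hP'
  exact ⟨sup_le_sup_left E.augSq_le_augDivSq _,
    (sup_assoc _ _ _).trans (congrArg _ (E.augSq_sup_span_pPowMonos hp)),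
    E.span_pPowMonos_inf_le hp⟩
end
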